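/- arXiv:1604.05654 — 8 statements merged into one kernel-verified Lean document; each statement's English description precedes it below -/
import Mathlib

section
/- For every positive integer m, the sum over q from 1 to m-1 of C(m,q)·C(m-1,q)/C(2m,2q) (as rational numbers, where C denotes the binomial coefficient) equals -1 + (1/2)·4^m·(m!)^2/(2m)!. -/
/-!
With `c k = centralBinom k`, the identities `m * C(m-1,q) = (m-q) * C(m,q)` and
`C(m,q)^2 / C(2m,2q) = c q * c (m-q) * m!^2 / (2m)!` turn the sum, extended by the terms
`q = 0` (equal to `1`) and `q = m` (equal to `0`), into `m!^2 / (m (2m)!) * ∑ (m-q) c q c (m-q)`.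
By the symmetry `q ↔ m - q` this weighted sum is `m/2 * ∑ c q c (m-q) = m/2 * 4^m`; the
convolution `∑ c q c (n-q) = 4^n` follows by induction from the same symmetry and
`(k+1) c (k+1) = 2 (2k+1) c k`.
-/

open Finset Nat

namespace Nat

theorem two_mul_sum_antidiagonal_snd_mul_centralBinom_mul (n : ℕ) :
    2 * ∑ p ∈ antidiagonal n, p.2 * (centralBinom p.1 * centralBinom p.2)
      = n * ∑ p ∈ antidiagonal n, centralBinom p.1 * centralBinom p.2 := by
  rw [two_mul]
  nth_rw 1 [← Finset.Nat.sum_antidiagonal_swap]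
  rw [← sum_add_distrib, mul_sum]
  refine sum_congr rfl fun p hp => ?_
  rw [← mem_antidiagonal.mp hp, Prod.fst_swap, Prod.snd_swap]
  ring

theorem sum_antidiagonal_centralBinom_mul_centralBinom (n : ℕ) :
    ∑ p ∈ antidiagonal n, centralBinom p.1 * centralBinom p.2 = 4 ^ n := by
  induction n with
  | zero => simp
  | succ n ih =>
    refine Nat.eq_of_mul_eq_mul_left n.succ_pos ?_
    calc (n + 1) * ∑ p ∈ antidiagonal (n + 1), centralBinom p.1 * centralBinom p.2
        = 2 * ∑ p ∈ antidiagonal n, (p.2 + 1) * (centralBinom p.1 * centralBinom (p.2 + 1)) := by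
          rw [← two_mul_sum_antidiagonal_snd_mul_centralBinom_mul,
            Finset.Nat.sum_antidiagonal_succ', zero_mul, zero_add]
      _ = ∑ p ∈ antidiagonal n, (4 * (2 * (p.2 * (centralBinom p.1 * centralBinom p.2)))
            + 4 * (centralBinom p.1 * centralBinom p.2)) := by
          rw [mul_sum]
          refine sum_congr rfl fun p _ => ?_
          linear_combination 2 * centralBinom p.1 * succ_mul_centralBinom_succ p.2
      _ = 4 * (2 * ∑ p ∈ antidiagonal n, p.2 * (centralBinom p.1 * centralBinom p.2))
            + 4 * ∑ p ∈ antidiagonal n, centralBinom p.1 * centralBinom p.2 := by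
          simp only [sum_add_distrib, mul_sum]
      _ = (n + 1) * 4 ^ (n + 1) := by
          rw [two_mul_sum_antidiagonal_snd_mul_centralBinom_mul, ih]
          ring

theorem choose_two_mul_mul_centralBinom_mul_factorial_sq (i j : ℕ) :
    (2 * (i + j)).choose (2 * i) * (centralBinom i * centralBinom j) * (i + j)! ^ 2
      = (i + j).choose i ^ 2 * (2 * (i + j))! := by
  have hcb (k : ℕ) : centralBinom k * k ! * k ! = (2 * k)! := by
    rw [centralBinom, two_mul, add_choose_mul_factorial_mul_factorial]
  rw [mul_add, choose_symm_add, choose_symm_add, ← add_choose_mul_factorial_mul_factorial i j,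
    ← add_choose_mul_factorial_mul_factorial (2 * i) (2 * j), ← hcb i, ← hcb j]
  ring

end Nat

theorem Finset.sum_range_succ_eq_add_sum_Icc_add {M : Type*} [AddCommMonoid M] (f : ℕ → M)
    {m : ℕ} (hm : 1 ≤ m) :
    ∑ q ∈ range (m + 1), f q = f 0 + ∑ q ∈ Icc 1 (m - 1), f q + f m := by
  obtain ⟨n, rfl⟩ := Nat.exists_eq_add_of_le' hm
  rw [sum_range_succ, range_eq_Ico, sum_eq_sum_Ico_succ_bot (by omega : 0 < n + 1), zero_add,
    Ico_add_one_right_eq_Icc, Nat.add_sub_cancel]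

theorem Nat.cast_choose_mul_choose_sub_one_div_choose_two_mul {i j m : ℕ} (hij : i + j = m)
    (hm : m ≠ 0) :
    ((m.choose i : ℚ) * ((m - 1).choose i : ℚ)) / ((2 * m).choose (2 * i) : ℚ)
      = j / m * (centralBinom i * centralBinom j) * m ! ^ 2 / (2 * m)! := by
  subst hij
  have hpred := Nat.choose_mul_succ_eq (i + j - 1) i
  rw [Nat.sub_add_cancel (Nat.one_le_iff_ne_zero.mpr hm), Nat.add_sub_cancel_left] at hpred
  have hsq := choose_two_mul_mul_centralBinom_mul_factorial_sq i j
  have hchoose : ((2 * (i + j)).choose (2 * i) : ℚ) ≠ 0 := by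
    exact_mod_cast (Nat.choose_pos (by omega)).ne'
  have hm' : (i + j : ℚ) ≠ 0 := by exact_mod_cast hm
  qify at hpred hsq
  push_cast at hchoose hsq ⊢
  field_simp
  linear_combination ((i + j).choose i * (2 * (i + j) : ℕ)! : ℚ) * hpred - (j : ℚ) * hsq

theorem sum_q_identity (m : ℕ) (hm : 1 ≤ m) :
    ∑ q ∈ Finset.Icc 1 (m - 1),
      ((m.choose q : ℚ) * ((m - 1).choose q : ℚ)) / ((2 * m).choose (2 * q) : ℚ)
    = -1 + (1 / 2) * 4 ^ m * (m.factorial : ℚ) ^ 2 / ((2 * m).factorial : ℚ) := by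
  have hm0 : m ≠ 0 := by omega
  set f : ℕ → ℚ := fun q =>
    ((m.choose q : ℚ) * ((m - 1).choose q : ℚ)) / ((2 * m).choose (2 * q) : ℚ)
  have hsplit := sum_range_succ_eq_add_sum_Icc_add f hm
  have hf0 : f 0 = 1 := by simp [f]
  have hfm : f m = 0 := by simp [f, choose_eq_zero_of_lt (by omega : m - 1 < m)]
  have hweighted : ((∑ p ∈ antidiagonal m, p.2 * (centralBinom p.1 * centralBinom p.2) : ℕ) : ℚ)
      = m * 4 ^ m / 2 := by
    rw [eq_div_iff two_ne_zero, mul_comm]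
    exact_mod_cast (two_mul_sum_antidiagonal_snd_mul_centralBinom_mul m).trans
      (by rw [sum_antidiagonal_centralBinom_mul_centralBinom])
  have hrange : ∑ q ∈ range (m + 1), f q = m ! ^ 2 / (2 * m)! / m *
      ((∑ p ∈ antidiagonal m, p.2 * (centralBinom p.1 * centralBinom p.2) : ℕ) : ℚ) := by
    rw [← Finset.Nat.sum_antidiagonal_eq_sum_range_succ_mk (fun p => f p.1), Nat.cast_sum, mul_sum]
    refine sum_congr rfl fun p hp => ?_
    rw [show f p.1 = _ from
      Nat.cast_choose_mul_choose_sub_one_div_choose_two_mul (mem_antidiagonal.mp hp) hm0]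
    push_cast
    ring
  rw [hweighted, hsplit, hf0, hfm] at hrange
  field_simp at hrange ⊢
  linear_combination hrange
end

section
/- For every positive integer m, the sum over q from 1 to m-1 of C(m,q)·C(m-1,q+1)/C(2m,2q) (as rational numbers) equals m + 2 - (3/2)·4^m·(m!)^2/(2m)!. -/
noncomputable def Gg (m q : ℕ) : ℚ :=
  ((q : ℚ) + 1) * (2 * (m : ℚ) + 1 - 2 * q) * (m.choose q : ℚ) * (m.choose (q + 1) : ℚ) /
    ((m : ℚ) * (2 * (m : ℚ) + 1) * ((2 * m).choose (2 * q) : ℚ))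

lemma step (q k : ℕ) :
    ((q + k + 2).choose q : ℚ) * ((q + k + 1).choose (q + 1) : ℚ) /
      ((2 * q + 2 * k + 4).choose (2 * q) : ℚ)
    = (2 * (q : ℚ) + 2 * k + 4) / (2 * (q : ℚ) + 2 * k + 3) *
        (((q + k + 1).choose q : ℚ) * ((q + k).choose (q + 1) : ℚ) /
          ((2 * q + 2 * k + 2).choose (2 * q) : ℚ))
      + Gg (q + k + 1) q - Gg (q + k + 1) (q + 1) := by
  have e1 : 2 * (q + k + 1) = 2 * q + 2 * k + 2 := by ring
  have e2 : 2 * (q + 1) = 2 * q + 2 := by ring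
  simp only [Gg, e1, e2]
  -- natural number relations
  have r1 : (q + k + 1).choose (q + 1) * (q + 1) = (q + k + 1).choose q * (k + 1) := by
    have := Nat.choose_succ_right_eq (q + k + 1) q
    simpa [Nat.add_sub_cancel_left, show q + k + 1 - q = k + 1 by omega] using this
  have r2 : (q + k + 1).choose (q + 2) * (q + 2) = (q + k + 1).choose (q + 1) * k := by
    have := Nat.choose_succ_right_eq (q + k + 1) (q + 1)
    simpa [show q + k + 1 - (q + 1) = k by omega] using this
  have r3 : (q + k).choose (q + 1) * (q + k + 1) = (q + k + 1).choose (q + 1) * k := by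
    have := Nat.choose_mul_succ_eq (q + k) (q + 1)
    simpa [show q + k + 1 - (q + 1) = k by omega] using this
  have r4 : (q + k + 1).choose q * (q + k + 2) = (q + k + 2).choose q * (k + 2) := by
    have := Nat.choose_mul_succ_eq (q + k + 1) q
    simpa [show q + k + 1 + 1 - q = k + 2 by omega] using this
  have r5 : (2 * q + 2 * k + 2).choose (2 * q + 2) * ((2 * q + 2) * (2 * q + 1)) =
      (2 * q + 2 * k + 2).choose (2 * q) * ((2 * k + 2) * (2 * k + 1)) := by
    have h1 := Nat.choose_succ_right_eq (2 * q + 2 * k + 2) (2 * q)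
    have h2 := Nat.choose_succ_right_eq (2 * q + 2 * k + 2) (2 * q + 1)
    rw [show 2 * q + 2 * k + 2 - 2 * q = 2 * k + 2 by omega] at h1
    rw [show 2 * q + 2 * k + 2 - (2 * q + 1) = 2 * k + 1 by omega] at h2
    rw [show 2 * q + 1 + 1 = 2 * q + 2 by omega] at h2
    calc (2 * q + 2 * k + 2).choose (2 * q + 2) * ((2 * q + 2) * (2 * q + 1))
        = (2 * q + 2 * k + 2).choose (2 * q + 2) * (2 * q + 2) * (2 * q + 1) := by ring
      _ = (2 * q + 2 * k + 2).choose (2 * q + 1) * (2 * k + 1) * (2 * q + 1) := by rw [h2]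
      _ = (2 * q + 2 * k + 2).choose (2 * q + 1) * (2 * q + 1) * (2 * k + 1) := by ring
      _ = (2 * q + 2 * k + 2).choose (2 * q) * (2 * k + 2) * (2 * k + 1) := by rw [h1]
      _ = _ := by ring
  have r6 : (2 * q + 2 * k + 4).choose (2 * q) * ((2 * k + 4) * (2 * k + 3)) =
      (2 * q + 2 * k + 2).choose (2 * q) * ((2 * q + 2 * k + 4) * (2 * q + 2 * k + 3)) := by
    have h1 := Nat.choose_mul_succ_eq (2 * q + 2 * k + 3) (2 * q)
    have h2 := Nat.choose_mul_succ_eq (2 * q + 2 * k + 2) (2 * q)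
    rw [show 2 * q + 2 * k + 3 + 1 - 2 * q = 2 * k + 4 by omega,
      show 2 * q + 2 * k + 3 + 1 = 2 * q + 2 * k + 4 by omega] at h1
    rw [show 2 * q + 2 * k + 2 + 1 - 2 * q = 2 * k + 3 by omega,
      show 2 * q + 2 * k + 2 + 1 = 2 * q + 2 * k + 3 by omega] at h2
    calc (2 * q + 2 * k + 4).choose (2 * q) * ((2 * k + 4) * (2 * k + 3))
        = (2 * q + 2 * k + 4).choose (2 * q) * (2 * k + 4) * (2 * k + 3) := by ring
      _ = (2 * q + 2 * k + 3).choose (2 * q) * (2 * q + 2 * k + 4) * (2 * k + 3) := by rw [← h1]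
      _ = (2 * q + 2 * k + 3).choose (2 * q) * (2 * k + 3) * (2 * q + 2 * k + 4) := by ring
      _ = ((2 * q + 2 * k + 2).choose (2 * q) * (2 * q + 2 * k + 3)) * (2 * q + 2 * k + 4) := by
            rw [← h2]
      _ = _ := by ring
  -- cast to ℚ and express everything in terms of X and E
  have hq1 : ((q : ℚ) + 1) ≠ 0 := by positivity
  have hq2 : ((q : ℚ) + 2) ≠ 0 := by positivity
  have hk2 : ((k : ℚ) + 2) ≠ 0 := by positivity
  have hm : ((q : ℚ) + k + 1) ≠ 0 := by positivity
  have h2q1 : (2 * (q : ℚ) + 1) ≠ 0 := by positivity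
  have h2q2 : (2 * (q : ℚ) + 2) ≠ 0 := by positivity
  have hB : ((q + k + 1).choose (q + 1) : ℚ)
      = ((q + k + 1).choose q : ℚ) * ((k : ℚ) + 1) / ((q : ℚ) + 1) := by
    field_simp
    exact_mod_cast r1
  have hC : ((q + k + 1).choose (q + 2) : ℚ)
      = ((q + k + 1).choose (q + 1) : ℚ) * (k : ℚ) / ((q : ℚ) + 2) := by
    field_simp
    exact_mod_cast r2
  have hD : ((q + k).choose (q + 1) : ℚ)
      = ((q + k + 1).choose (q + 1) : ℚ) * (k : ℚ) / ((q : ℚ) + k + 1) := by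
    field_simp
    exact_mod_cast r3
  have hA : ((q + k + 2).choose q : ℚ)
      = ((q + k + 1).choose q : ℚ) * ((q : ℚ) + k + 2) / ((k : ℚ) + 2) := by
    field_simp
    exact_mod_cast r4.symm
  have hE2 : ((2 * q + 2 * k + 2).choose (2 * q + 2) : ℚ)
      = ((2 * q + 2 * k + 2).choose (2 * q) : ℚ) * ((2 * (k : ℚ) + 2) * (2 * (k : ℚ) + 1)) /
          ((2 * (q : ℚ) + 2) * (2 * (q : ℚ) + 1)) := by
    rw [eq_div_iff (by positivity)]
    exact_mod_cast r5
  have hF : ((2 * q + 2 * k + 4).choose (2 * q) : ℚ)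
      = ((2 * q + 2 * k + 2).choose (2 * q) : ℚ) *
          ((2 * (q : ℚ) + 2 * k + 4) * (2 * (q : ℚ) + 2 * k + 3)) /
          ((2 * (k : ℚ) + 4) * (2 * (k : ℚ) + 3)) := by
    rw [eq_div_iff (by positivity)]
    exact_mod_cast r6
  have hE : ((2 * q + 2 * k + 2).choose (2 * q) : ℚ) ≠ 0 := by
    have : 0 < (2 * q + 2 * k + 2).choose (2 * q) := Nat.choose_pos (by omega)
    exact_mod_cast this.ne'
  rw [hA, hC, hD, hF, hE2, hB]
  push_cast
  field_simp
  ring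

lemma main' (n : ℕ) :
    ∑ q ∈ Finset.Icc 1 n,
      (((n + 1).choose q : ℚ) * ((n).choose (q + 1) : ℚ)) / ((2 * (n + 1)).choose (2 * q) : ℚ)
    = ((n : ℚ) + 1) + 2 -
        (3 / 2) * 4 ^ (n + 1) * (((n + 1).factorial : ℚ)) ^ 2 / ((2 * (n + 1)).factorial : ℚ) := by
  induction n with
  | zero =>
      simp [Nat.factorial]
      norm_num
  | succ n ih =>
      rw [Finset.sum_Icc_succ_top (by omega : 1 ≤ n + 1)]
      have hlast : (((n + 1 + 1).choose (n + 1) : ℚ) * ((n + 1).choose (n + 1 + 1) : ℚ)) /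
          ((2 * (n + 1 + 1)).choose (2 * (n + 1)) : ℚ) = 0 := by
        rw [show (n + 1).choose (n + 1 + 1) = 0 from Nat.choose_eq_zero_of_lt (by omega)]
        simp
      rw [hlast, add_zero]
      have hterm : ∀ q ∈ Finset.Icc 1 n,
          (((n + 1 + 1).choose q : ℚ) * ((n + 1).choose (q + 1) : ℚ)) /
            ((2 * (n + 1 + 1)).choose (2 * q) : ℚ)
          = (2 * (n : ℚ) + 4) / (2 * (n : ℚ) + 3) *
              ((((n + 1).choose q : ℚ) * ((n).choose (q + 1) : ℚ)) /
                ((2 * (n + 1)).choose (2 * q) : ℚ))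
            + (Gg (n + 1) q - Gg (n + 1) (q + 1)) := by
        intro q hq
        have hqn : q ≤ n := (Finset.mem_Icc.mp hq).2
        obtain ⟨k, rfl⟩ : ∃ k, n = q + k := ⟨n - q, by omega⟩
        have h := step q k
        rw [show 2 * (q + k + 1 + 1) = 2 * q + 2 * k + 4 by ring,
          show 2 * (q + k + 1) = 2 * q + 2 * k + 2 by ring]
        push_cast at h ⊢
        linear_combination h
      rw [Finset.sum_congr rfl hterm]
      rw [Finset.sum_add_distrib, ← Finset.mul_sum, ih]
      have htel : ∑ q ∈ Finset.Icc 1 n, (Gg (n + 1) q - Gg (n + 1) (q + 1))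
          = Gg (n + 1) 1 - Gg (n + 1) (1 + n) := by
        rw [← Finset.Ico_add_one_right_eq_Icc, Finset.sum_Ico_eq_sum_range]
        simp only [show n + 1 - 1 = n from rfl]
        exact Finset.sum_range_sub' (fun i => Gg (n + 1) (1 + i)) n
      rw [htel]
      have hc2 : (2 * (n + 1)).choose 2 = (n + 1) * (2 * n + 1) := by
        rw [Nat.choose_two_right, show 2 * (n + 1) - 1 = 2 * n + 1 by omega,
          show 2 * (n + 1) * (2 * n + 1) = 2 * ((n + 1) * (2 * n + 1)) by ring]
        exact Nat.mul_div_cancel_left _ (by norm_num)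
      have hc2' : (n + 1).choose 2 * 2 = (n + 1) * n := by
        have h := Nat.choose_succ_right_eq (n + 1) 1
        simpa [Nat.choose_one_right, show n + 1 - 1 = n by omega] using h
      have hG1 : Gg (n + 1) 1 = (n : ℚ) / (2 * (n : ℚ) + 3) := by
        have h2 : ((n + 1).choose 2 : ℚ) = ((n : ℚ) + 1) * n / 2 := by
          rw [eq_div_iff (two_ne_zero)]
          exact_mod_cast hc2'
        have h3 : (((2 * (n + 1)).choose 2 : ℕ) : ℚ) = ((n : ℚ) + 1) * (2 * n + 1) := by
          rw [hc2]; push_cast; ring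
        simp only [Gg, Nat.choose_one_right, mul_one, h2, h3]
        have hn1 : ((n : ℚ) + 1) ≠ 0 := by positivity
        have hn3 : (2 * (n : ℚ) + 3) ≠ 0 := by positivity
        have hn21 : (2 * (n : ℚ) + 1) ≠ 0 := by positivity
        push_cast
        field_simp
        ring
      have hGtop : Gg (n + 1) (1 + n) = 0 := by
        have : (n + 1).choose (1 + n + 1) = 0 := Nat.choose_eq_zero_of_lt (by omega)
        simp [Gg, this]
      rw [hG1, hGtop]
      -- final algebra with factorials
      have hf1 : ((n + 1 + 1).factorial : ℚ) = ((n : ℚ) + 2) * ((n + 1).factorial : ℚ) := by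
        rw [Nat.factorial_succ]; push_cast; ring
      have hf2 : ((2 * (n + 1 + 1)).factorial : ℚ)
          = (2 * (n : ℚ) + 4) * (2 * (n : ℚ) + 3) * ((2 * (n + 1)).factorial : ℚ) := by
        rw [show 2 * (n + 1 + 1) = (2 * (n + 1) + 1) + 1 by ring, Nat.factorial_succ,
          Nat.factorial_succ]
        push_cast; ring
      rw [hf1, hf2]
      have hfac : ((2 * (n + 1)).factorial : ℚ) ≠ 0 := by
        exact_mod_cast (Nat.factorial_pos _).ne'
      have hn3 : (2 * (n : ℚ) + 3) ≠ 0 := by positivity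
      push_cast
      field_simp
      ring

theorem sum_q_add_one_identity (m : ℕ) (hm : 1 ≤ m) :
    ∑ q ∈ Finset.Icc 1 (m - 1),
      ((m.choose q : ℚ) * ((m - 1).choose (q + 1) : ℚ)) / ((2 * m).choose (2 * q) : ℚ)
    = (m : ℚ) + 2 - (3 / 2) * 4 ^ m * (m.factorial : ℚ) ^ 2 / ((2 * m).factorial : ℚ) := by
  obtain ⟨n, rfl⟩ : ∃ n, m = n + 1 := ⟨m - 1, by omega⟩
  have h := main' n
  simpa using h
end

section
/- For every natural number m and every integer i ≥ 1, the sum over q from 0 to m of C(2q,q)·C(2m-2q,m-q)·i/(q+i) (as rational numbers) equals C(2m+2i-1, m+i)/C(2i-1, i). -/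
/-!
The sum `X(m) = ∑_q c(q) c(m-q) i / (q+i)`, with `c` the central binomial coefficients, satisfies
the recurrence `(m+i+1) X(m+1) = 2 (2(m+i)+1) X(m)` of `c(m+i)`, and `X(0) = 1`; hence
`X(m) = c(m+i) / c(i)`, which is the right-hand side because `c(n) = 2 C(2n-1, n)` for `n ≥ 1`.
The recurrence is proved by creative telescoping: its defect at the `q`-th summand is
`G(q) - G(q+1)` with `G(q) = i q c(q) c(m+1-q) / (m+1)`.
-/

open Nat Finset

theorem Nat.centralBinom_succ_eq_two_mul_choose (n : ℕ) :
    centralBinom (n + 1) = 2 * (2 * n + 1).choose (n + 1) := by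
  rw [centralBinom_eq_two_mul_choose, show 2 * (n + 1) = 2 * n + 1 + 1 by ring,
    choose_succ_succ', choose_symm_half, ← two_mul]

section

variable {K : Type*} [Field K] [CharZero K]

theorem Nat.cast_centralBinom_succ (n : ℕ) :
    (centralBinom (n + 1) : K) = 2 * (2 * n + 1) * centralBinom n / (n + 1) := by
  rw [eq_div_iff (Nat.cast_add_one_ne_zero n), mul_comm]
  exact_mod_cast succ_mul_centralBinom_succ n

variable (K) in
def gouldSum (i m : ℕ) : K :=
  ∑ q ∈ range (m + 1), (centralBinom q * centralBinom (m - q) * i / (q + i) : K)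

theorem gouldSum_summand_telescoping {i m q : ℕ} (hi : 0 < i) (hq : q ≤ m) :
    (m + i + 1 : K) * (centralBinom q * centralBinom (m + 1 - q) * i / (q + i))
        - 2 * (2 * (m + i) + 1) * (centralBinom q * centralBinom (m - q) * i / (q + i))
      = i * q * centralBinom q * centralBinom (m + 1 - q) / (m + 1)
        - i * (q + 1) * centralBinom (q + 1) * centralBinom (m - q) / (m + 1) := by
  obtain ⟨k, rfl⟩ := Nat.exists_eq_add_of_le hq
  have hqi : (q + i : K) ≠ 0 := by exact_mod_cast (by omega : q + i ≠ 0)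
  have hqk : ((q + k : ℕ) + 1 : K) ≠ 0 := Nat.cast_add_one_ne_zero _
  rw [show q + k + 1 - q = k + 1 by omega, show q + k - q = k by omega,
    Nat.cast_centralBinom_succ k, Nat.cast_centralBinom_succ q]
  push_cast at hqk ⊢
  field_simp
  ring

theorem gouldSum_succ {i : ℕ} (hi : 0 < i) (m : ℕ) :
    (m + i + 1 : K) * gouldSum K i (m + 1) = 2 * (2 * (m + i) + 1) * gouldSum K i m := by
  set G : ℕ → K := fun q => i * q * centralBinom q * centralBinom (m + 1 - q) / (m + 1)
  have telescope : ∑ q ∈ range (m + 1),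
      ((m + i + 1 : K) * (centralBinom q * centralBinom (m + 1 - q) * i / (q + i))
        - 2 * (2 * (m + i) + 1) * (centralBinom q * centralBinom (m - q) * i / (q + i)))
      = G 0 - G (m + 1) := by
    rw [← sum_range_sub']
    refine sum_congr rfl fun q hq => ?_
    rw [gouldSum_summand_telescoping hi (Nat.lt_succ_iff.mp (mem_range.mp hq))]
    simp only [G, Nat.cast_succ, Nat.add_sub_add_right]
  have hG : G 0 - G (m + 1) = -(i * centralBinom (m + 1)) := by
    simp only [G, Nat.sub_self, centralBinom_zero]
    push_cast
    field_simp
    ring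
  have last : (m + i + 1 : K) * (centralBinom (m + 1) * centralBinom (m + 1 - (m + 1)) * i
      / ((m + 1 : ℕ) + i)) = i * centralBinom (m + 1) := by
    have hmi : (m + 1 + i : K) ≠ 0 := by exact_mod_cast (by omega : m + 1 + i ≠ 0)
    rw [Nat.sub_self, centralBinom_zero]
    push_cast
    field_simp
    ring
  rw [sum_sub_distrib, ← mul_sum, ← mul_sum, hG] at telescope
  rw [gouldSum, sum_range_succ, mul_add, last, gouldSum]
  linear_combination telescope

theorem gouldSum_eq {i : ℕ} (hi : 0 < i) (m : ℕ) :
    gouldSum K i m = centralBinom (m + i) / centralBinom i := by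
  have hc (n : ℕ) : (centralBinom n : K) ≠ 0 := Nat.cast_ne_zero.mpr (centralBinom_ne_zero n)
  induction m with
  | zero =>
    have hi' : (i : K) ≠ 0 := Nat.cast_ne_zero.mpr hi.ne'
    simp [gouldSum, hi', hc]
  | succ m ih =>
    have hmi : (m + i + 1 : K) ≠ 0 := by exact_mod_cast (Nat.succ_ne_zero (m + i))
    rw [← mul_right_inj' hmi, gouldSum_succ hi, ih, show m + 1 + i = m + i + 1 by ring,
      Nat.cast_centralBinom_succ]
    push_cast
    field_simp

end

theorem gould_identity (m i : ℕ) (hi : 1 ≤ i) :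
    ∑ q ∈ Finset.range (m + 1),
      ((2 * q).choose q : ℚ) * ((2 * m - 2 * q).choose (m - q) : ℚ) * (i : ℚ) / ((q : ℚ) + i)
    = ((2 * m + 2 * i - 1).choose (m + i) : ℚ) / ((2 * i - 1).choose i : ℚ) := by
  obtain ⟨j, rfl⟩ := Nat.exists_eq_add_of_le' hi
  have hsummand (q : ℕ) : (2 * m - 2 * q).choose (m - q) = centralBinom (m - q) := by
    rw [← Nat.mul_sub, centralBinom_eq_two_mul_choose]
  simp only [hsummand, ← centralBinom_eq_two_mul_choose]
  change gouldSum ℚ (j + 1) m = _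
  rw [gouldSum_eq hi, show 2 * m + 2 * (j + 1) - 1 = 2 * (m + j) + 1 by omega,
    show 2 * (j + 1) - 1 = 2 * j + 1 by omega, ← add_assoc,
    centralBinom_succ_eq_two_mul_choose, centralBinom_succ_eq_two_mul_choose]
  push_cast
  rw [mul_div_mul_left _ _ two_ne_zero]
end

section
/- For every natural number m, the sum over q from 0 to m of C(2q,q)·C(2m-2q,m-q)/((q+1)(q+2)) (as rational numbers) equals C(2m+1, m+1) - (1/6)·C(2m+3, m+2). -/
open Finset

private lemma cb_cast (n : ℕ) : ((2*n).choose n : ℚ) = ((n : ℚ)+1) * catalan n := by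
  have h := succ_mul_catalan_eq_centralBinom n
  rw [Nat.centralBinom_eq_two_mul_choose] at h
  exact_mod_cast h.symm

private lemma catsum (m : ℕ) :
    ∑ q ∈ range (m+1), (catalan q : ℚ) * catalan (m - q) = catalan (m+1) := by
  have h := catalan_succ m
  rw [Fin.sum_univ_eq_sum_range (fun i => catalan i * catalan (m - i))] at h
  exact_mod_cast congrArg (Nat.cast : ℕ → ℚ) h.symm

private lemma sumA (m : ℕ) :
    ∑ q ∈ range (m+1), (catalan q : ℚ) * ((2*(m-q)).choose (m-q) : ℚ)
      = ((2*(m+1)).choose (m+1) : ℚ) / 2 := by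
  set S := ∑ q ∈ range (m+1), (catalan q : ℚ) * ((2*(m-q)).choose (m-q) : ℚ) with hS
  have hrefl : S = ∑ q ∈ range (m+1),
      (catalan (m - q) : ℚ) * ((2*q).choose q : ℚ) := by
    rw [hS, ← Finset.sum_range_reflect]
    refine Finset.sum_congr rfl fun q hq => ?_
    have hq' : q ≤ m := Nat.lt_succ_iff.mp (Finset.mem_range.mp hq)
    have h1 : m + 1 - 1 - q = m - q := by omega
    have h2 : m - (m - q) = q := by omega
    rw [h1, h2]
  have key : S + S = ((m : ℚ) + 2) * catalan (m+1) := by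
    nth_rewrite 2 [hrefl]
    rw [← Finset.sum_add_distrib, ← catsum m, Finset.mul_sum]
    refine Finset.sum_congr rfl fun q hq => ?_
    have hq' : q ≤ m := Nat.lt_succ_iff.mp (Finset.mem_range.mp hq)
    rw [cb_cast (m - q), cb_cast q]
    have : ((m - q : ℕ) : ℚ) = (m : ℚ) - q := by
      rw [Nat.cast_sub hq']
    rw [this]
    ring
  rw [cb_cast (m+1)]
  push_cast
  linarith [key]

theorem D_two_zero (m : ℕ) :
    ∑ q ∈ Finset.range (m + 1),
      ((2 * q).choose q : ℚ) * ((2 * m - 2 * q).choose (m - q) : ℚ)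
        / (((q : ℚ) + 1) * ((q : ℚ) + 2))
    = ((2 * m + 1).choose (m + 1) : ℚ) - (1 / 6) * ((2 * m + 3).choose (m + 2) : ℚ) := by
  -- notation
  set D := ∑ q ∈ Finset.range (m + 1),
      ((2 * q).choose q : ℚ) * ((2 * m - 2 * q).choose (m - q) : ℚ)
        / (((q : ℚ) + 1) * ((q : ℚ) + 2)) with hD
  have hS1 : ∑ q ∈ range (m+1), (catalan q : ℚ) * ((2*(m-q)).choose (m-q) : ℚ)
      = ((2*(m+1)).choose (m+1) : ℚ) / 2 := sumA m
  -- sumA at m+1, split off q = 0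
  have hA1 := sumA (m+1)
  rw [Finset.sum_range_succ'] at hA1
  simp only [catalan_zero, Nat.cast_one, one_mul, Nat.sub_zero] at hA1
  -- hA1 : ∑ q in range (m+1), catalan (q+1) * C(2*(m+1-(q+1)), ...) + C(2(m+1),m+1) = C(2(m+2),m+2)/2
  have hB : ∑ q ∈ range (m+1), (catalan (q+1) : ℚ) * ((2*(m-q)).choose (m-q) : ℚ)
      = ((2*(m+2)).choose (m+2) : ℚ) / 2 - ((2*(m+1)).choose (m+1) : ℚ) := by
    have : ∀ q ∈ range (m+1),
        (catalan (q+1) : ℚ) * ((2*(m+1-(q+1))).choose (m+1-(q+1)) : ℚ)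
        = (catalan (q+1) : ℚ) * ((2*(m-q)).choose (m-q) : ℚ) := by
      intro q hq
      have : m + 1 - (q + 1) = m - q := by omega
      rw [this]
    rw [Finset.sum_congr rfl this] at hA1
    linarith [hA1]
  -- pointwise: catalan (q+1) * c_{m-q} = 4 * catalan q * c_{m-q} - 6 * term
  have hpt : ∀ q ∈ range (m+1),
      (catalan (q+1) : ℚ) * ((2*(m-q)).choose (m-q) : ℚ)
      = 4 * ((catalan q : ℚ) * ((2*(m-q)).choose (m-q) : ℚ))
        - 6 * (((2 * q).choose q : ℚ) * ((2 * m - 2 * q).choose (m - q) : ℚ)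
            / (((q : ℚ) + 1) * ((q : ℚ) + 2))) := by
    intro q hq
    have hq' : q ≤ m := Nat.lt_succ_iff.mp (Finset.mem_range.mp hq)
    have h2m : 2 * m - 2 * q = 2 * (m - q) := by omega
    rw [h2m]
    have hc : ((2*q).choose q : ℚ) = ((q : ℚ)+1) * catalan q := cb_cast q
    have hc1 : ((2*(q+1)).choose (q+1) : ℚ) = ((q : ℚ)+2) * catalan (q+1) := by
      rw [cb_cast (q+1)]; push_cast; ring
    -- succ_mul_centralBinom_succ : (q+1) * centralBinom (q+1) = 2*(2*q+1) * centralBinom q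
    have hsucc := Nat.succ_mul_centralBinom_succ q
    rw [Nat.centralBinom_eq_two_mul_choose, Nat.centralBinom_eq_two_mul_choose] at hsucc
    have hsuccQ : ((q : ℚ)+1) * ((2*(q+1)).choose (q+1) : ℚ)
        = 2*(2*(q : ℚ)+1) * ((2*q).choose q : ℚ) := by exact_mod_cast hsucc
    rw [hc1] at hsuccQ
    -- so catalan (q+1) = (4q+2) * c_q / ((q+1)(q+2))
    have h1 : (q : ℚ) + 1 ≠ 0 := by positivity
    have h2 : (q : ℚ) + 2 ≠ 0 := by positivity
    have hcat1 : (catalan (q+1) : ℚ)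
        = (4*(q:ℚ)+2) * ((2*q).choose q : ℚ) / (((q:ℚ)+1) * ((q:ℚ)+2)) := by
      field_simp
      nlinarith [hsuccQ]
    rw [hcat1, hc]
    field_simp
    ring
  rw [Finset.sum_congr rfl hpt] at hB
  rw [Finset.sum_sub_distrib, ← Finset.mul_sum, ← Finset.mul_sum, hS1, ← hD] at hB
  -- hB : 4 * (c_{m+1}/2) - 6 * D = c_{m+2}/2 - c_{m+1}
  -- relate c_{m+1}, c_{m+2} to RHS binomials
  have hh1 : ((2*(m+1)).choose (m+1) : ℚ) = 2 * ((2*m+1).choose (m+1) : ℚ) := by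
    have : (2*(m+1)).choose (m+1) = (2*m+1).choose m + (2*m+1).choose (m+1) := by
      have : 2*(m+1) = (2*m+1) + 1 := by ring
      rw [this, Nat.choose_succ_succ' (2*m+1) m]
    have hsym : (2*m+1).choose m = (2*m+1).choose (m+1) := by
      have := Nat.choose_symm (show m ≤ 2*m+1 by omega)
      have h' : 2*m+1-m = m+1 := by omega
      rw [h'] at this
      exact this.symm
    rw [this, hsym]; push_cast; ring
  have hh2 : ((2*(m+2)).choose (m+2) : ℚ) = 2 * ((2*m+3).choose (m+2) : ℚ) := by
    have : (2*(m+2)).choose (m+2) = (2*m+3).choose (m+1) + (2*m+3).choose (m+2) := by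
      have h : 2*(m+2) = (2*m+3) + 1 := by ring
      rw [h, Nat.choose_succ_succ' (2*m+3) (m+1)]
    have hsym : (2*m+3).choose (m+1) = (2*m+3).choose (m+2) := by
      have := Nat.choose_symm (show m+1 ≤ 2*m+3 by omega)
      have h' : 2*m+3-(m+1) = m+2 := by omega
      rw [h'] at this
      exact this.symm
    rw [this, hsym]; push_cast; ring
  rw [hh1, hh2] at hB
  linarith [hB]
end

section
/- For every integer m ≥ 1, the sum over q from 0 to m of C(2q,q)·C(2m-2q,m-q)·(m-q)·(m-q-1)/(q+1) (as rational numbers, where m-q and m-q-1 are integers, possibly negative) equals (2m+1)!/(m!·(m-1)!) - (3m/2)·4^m. -/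
/-- `gQ k` is the central binomial coefficient `C(2k,k)` as a rational. -/
def gQ (k : ℕ) : ℚ := ((2 * k).choose k : ℚ)

lemma gQ_zero : gQ 0 = 1 := by simp [gQ]

lemma gQ_succ (k : ℕ) : ((k : ℚ) + 1) * gQ (k + 1) = 2 * (2 * k + 1) * gQ k := by
  have h := Nat.succ_mul_centralBinom_succ k
  have h' := congrArg (Nat.cast (R := ℚ)) h
  unfold Nat.centralBinom at h'
  push_cast at h'
  unfold gQ
  linarith [h']

lemma catQ (q : ℕ) : ((q : ℚ) + 1) * (catalan q : ℚ) = gQ q := by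
  have h := succ_mul_catalan_eq_centralBinom q
  unfold Nat.centralBinom at h
  have h' := congrArg (Nat.cast (R := ℚ)) h
  push_cast at h'
  unfold gQ
  linarith [h']

lemma cat_eq_div (q : ℕ) : (catalan q : ℚ) = gQ q / ((q : ℚ) + 1) := by
  have hq1 : (q : ℚ) + 1 ≠ 0 := by positivity
  rw [eq_div_iff hq1]
  linear_combination catQ q

lemma gQ_succ_div (k : ℕ) : gQ (k + 1) = 2 * (2 * (k : ℚ) + 1) * gQ k / ((k : ℚ) + 1) := by
  have hk1 : (k : ℚ) + 1 ≠ 0 := by positivity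
  rw [eq_div_iff hk1]
  linear_combination gQ_succ k

/-- Key convolution: `∑ Cat q · C(2(m-q), m-q) = C(2m+2, m+1)/2`. -/
lemma Hsum (m : ℕ) :
    ∑ q ∈ Finset.range (m + 1), (catalan q : ℚ) * gQ (m - q) = gQ (m + 1) / 2 := by
  induction m with
  | zero => simp [gQ]
  | succ m ih =>
    set G : ℕ → ℚ := fun q => -(q : ℚ) * gQ q * gQ (m + 1 - q) / ((m : ℚ) + 1) with hG
    have key : ∀ q ∈ Finset.range (m + 1),
        ((m : ℚ) + 2) * ((catalan q : ℚ) * gQ (m + 1 - q))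
          = 2 * (2 * (m : ℚ) + 3) * ((catalan q : ℚ) * gQ (m - q)) + (G (q + 1) - G q) := by
      intro q hq
      rw [Finset.mem_range] at hq
      obtain ⟨k, hk⟩ : ∃ k, m = q + k := ⟨m - q, by omega⟩
      subst hk
      have e1 : q + k + 1 - q = k + 1 := by omega
      have e2 : q + k - q = k := by omega
      have e3 : q + k + 1 - (q + 1) = k := by omega
      simp only [hG, e1, e2, e3]
      rw [cat_eq_div q, gQ_succ_div q, gQ_succ_div k]
      have hq1 : (q : ℚ) + 1 ≠ 0 := by positivity
      have hk1 : (k : ℚ) + 1 ≠ 0 := by positivity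
      have hm1 : ((q : ℚ) + (k : ℚ)) + 1 ≠ 0 := by positivity
      push_cast
      field_simp
      ring
    have tele : ∑ q ∈ Finset.range (m + 1), (G (q + 1) - G q) = G (m + 1) - G 0 :=
      Finset.sum_range_sub G (m + 1)
    have hsum := Finset.sum_congr rfl key
    rw [Finset.sum_add_distrib, tele, ← Finset.mul_sum, ← Finset.mul_sum, ih] at hsum
    have hG0 : G 0 = 0 := by simp [hG]
    have hGm1 : G (m + 1) = -gQ (m + 1) := by
      simp only [hG, Nat.add_sub_cancel_left, Nat.sub_self]
      rw [gQ_zero]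
      have : ((m : ℚ) + 1) ≠ 0 := by positivity
      push_cast
      field_simp
    rw [hG0, hGm1] at hsum
    rw [Finset.sum_range_succ]
    have e4 : m + 1 - (m + 1) = 0 := by omega
    rw [e4, gQ_zero]
    have hcm := catQ (m + 1)
    have hgm2 := gQ_succ (m + 1)
    have hm2 : ((m : ℚ) + 2) ≠ 0 := by positivity
    have goal2 : ((m : ℚ) + 2) * ((∑ q ∈ Finset.range (m + 1), (catalan q : ℚ) * gQ (m + 1 - q))
        + (catalan (m + 1) : ℚ) * 1) = ((m : ℚ) + 2) * (gQ (m + 1 + 1) / 2) := by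
      rw [mul_add, hsum]
      push_cast at hcm hgm2 ⊢
      linear_combination hcm - hgm2 / 2
    exact mul_left_cancel₀ hm2 goal2

/-- First moment: `∑ Cat q · (m-q) · C(2(m-q), m-q) = (2m+1)·C(2m,m) - 4^m`. -/
lemma Bsum (m : ℕ) :
    ∑ q ∈ Finset.range (m + 1), (catalan q : ℚ) * ((m - q : ℕ) : ℚ) * gQ (m - q)
      = (2 * (m : ℚ) + 1) * gQ m - 4 ^ m := by
  induction m with
  | zero => simp [gQ]
  | succ m ih =>
    rw [Finset.sum_range_succ]
    have e4 : m + 1 - (m + 1) = 0 := by omega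
    rw [e4]
    have key : ∀ q ∈ Finset.range (m + 1),
        (catalan q : ℚ) * ((m + 1 - q : ℕ) : ℚ) * gQ (m + 1 - q)
          = 4 * ((catalan q : ℚ) * ((m - q : ℕ) : ℚ) * gQ (m - q))
            + 2 * ((catalan q : ℚ) * gQ (m - q)) := by
      intro q hq
      rw [Finset.mem_range] at hq
      obtain ⟨k, hk⟩ : ∃ k, m = q + k := ⟨m - q, by omega⟩
      subst hk
      have e1 : q + k + 1 - q = k + 1 := by omega
      have e2 : q + k - q = k := by omega
      rw [e1, e2]
      push_cast
      linear_combination (catalan q : ℚ) * gQ_succ k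
    rw [Finset.sum_congr rfl key, Finset.sum_add_distrib, ← Finset.mul_sum, ← Finset.mul_sum,
      ih, Hsum m]
    push_cast
    linear_combination (-2) * gQ_succ m

/-- Second moment. -/
lemma C2sum (m : ℕ) :
    ∑ q ∈ Finset.range (m + 1), (catalan q : ℚ) * ((m - q : ℕ) : ℚ) ^ 2 * gQ (m - q)
      = ((m : ℚ) + 1) * (2 * (m : ℚ) + 1) * gQ m - (1 + 3 * (m : ℚ) / 2) * 4 ^ m := by
  induction m with
  | zero => norm_num [gQ]
  | succ m ih =>
    rw [Finset.sum_range_succ]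
    have e4 : m + 1 - (m + 1) = 0 := by omega
    rw [e4]
    have key : ∀ q ∈ Finset.range (m + 1),
        (catalan q : ℚ) * ((m + 1 - q : ℕ) : ℚ) ^ 2 * gQ (m + 1 - q)
          = 4 * ((catalan q : ℚ) * ((m - q : ℕ) : ℚ) ^ 2 * gQ (m - q))
            + (6 * ((catalan q : ℚ) * ((m - q : ℕ) : ℚ) * gQ (m - q))
              + 2 * ((catalan q : ℚ) * gQ (m - q))) := by
      intro q hq
      rw [Finset.mem_range] at hq
      obtain ⟨k, hk⟩ : ∃ k, m = q + k := ⟨m - q, by omega⟩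
      subst hk
      have e1 : q + k + 1 - q = k + 1 := by omega
      have e2 : q + k - q = k := by omega
      rw [e1, e2]
      push_cast
      linear_combination ((catalan q : ℚ) * ((k : ℚ) + 1)) * gQ_succ k
    rw [Finset.sum_congr rfl key, Finset.sum_add_distrib, Finset.sum_add_distrib,
      ← Finset.mul_sum, ← Finset.mul_sum, ← Finset.mul_sum, ih, Bsum m, Hsum m]
    push_cast
    linear_combination (-(2 * (m : ℚ) + 5)) * gQ_succ m

theorem A_m_one (m : ℕ) (hm : 1 ≤ m) :
    ∑ q ∈ Finset.range (m + 1),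
      ((2 * q).choose q : ℚ) * ((2 * m - 2 * q).choose (m - q) : ℚ)
        * ((m : ℚ) - q) * ((m : ℚ) - q - 1) / ((q : ℚ) + 1)
    = ((2 * m + 1).factorial : ℚ) / ((m.factorial : ℚ) * ((m - 1).factorial : ℚ))
      - (3 * (m : ℚ) / 2) * 4 ^ m := by
  have key : ∀ q ∈ Finset.range (m + 1),
      ((2 * q).choose q : ℚ) * ((2 * m - 2 * q).choose (m - q) : ℚ)
        * ((m : ℚ) - q) * ((m : ℚ) - q - 1) / ((q : ℚ) + 1)
      = (catalan q : ℚ) * ((m - q : ℕ) : ℚ) ^ 2 * gQ (m - q)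
        - (catalan q : ℚ) * ((m - q : ℕ) : ℚ) * gQ (m - q) := by
    intro q hq
    rw [Finset.mem_range] at hq
    have hqm : q ≤ m := by omega
    have e1 : 2 * m - 2 * q = 2 * (m - q) := by omega
    rw [e1]
    have e2 : ((m - q : ℕ) : ℚ) = (m : ℚ) - q := by
      push_cast [Nat.cast_sub hqm]; ring
    have hq1 : (q : ℚ) + 1 ≠ 0 := by positivity
    have e3 : ((2 * (m - q)).choose (m - q) : ℚ) = gQ (m - q) := rfl
    have e4 : ((2 * q).choose q : ℚ) = gQ q := rfl
    rw [e2, e3, e4, cat_eq_div q]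
    field_simp
  rw [Finset.sum_congr rfl key, Finset.sum_sub_distrib, C2sum m, Bsum m]
  have hfac : ((2 * m + 1).factorial : ℚ) / ((m.factorial : ℚ) * ((m - 1).factorial : ℚ))
      = (m : ℚ) * (2 * (m : ℚ) + 1) * gQ m := by
    have h1 : (2 * m).choose m * m.factorial * m.factorial = (2 * m).factorial := by
      have := Nat.choose_mul_factorial_mul_factorial (show m ≤ 2 * m by omega)
      simpa [two_mul, Nat.add_sub_cancel] using this
    have h3 : m * (m - 1).factorial = m.factorial := Nat.mul_factorial_pred (by omega)
    have hf1 : (m.factorial : ℚ) ≠ 0 := by exact_mod_cast m.factorial_ne_zero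
    have hf2 : ((m - 1).factorial : ℚ) ≠ 0 := by exact_mod_cast (m - 1).factorial_ne_zero
    rw [div_eq_iff (mul_ne_zero hf1 hf2)]
    have h1' : (((2 * m).choose m : ℕ) : ℚ) * (m.factorial : ℚ) * (m.factorial : ℚ)
        = ((2 * m).factorial : ℚ) := by exact_mod_cast congrArg (Nat.cast (R := ℚ)) h1
    have h2' : ((2 * m + 1).factorial : ℚ) = (2 * (m : ℚ) + 1) * ((2 * m).factorial : ℚ) := by
      rw [Nat.factorial_succ]; push_cast; ring
    have h3' : (m : ℚ) * ((m - 1).factorial : ℚ) = (m.factorial : ℚ) := by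
      exact_mod_cast congrArg (Nat.cast (R := ℚ)) h3
    unfold gQ
    rw [h2', ← h1']
    linear_combination (-(2 * (m : ℚ) + 1) * (((2 * m).choose m : ℕ) : ℚ)
      * (m.factorial : ℚ)) * h3'
  rw [hfac]
  ring
end

section
/- For every integer m ≥ 1, the sum over q from 0 to m of C(2q,q)·C(2m-2q,m-q)·(m-q)·(m-q-1)·(m-q-2)/((q+1)(q+2)) (as rational numbers, where m-q, m-q-1, m-q-2 are integers, possibly negative) equals (5m/2)·4^m + (1/3)·(m-6)·(2m+1)!/(m!·(m-1)!). -/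
open Finset

private def cbQ (n : ℕ) : ℚ := n.centralBinom

private def ctQ (n : ℕ) : ℚ := catalan n

private lemma ctQ_cb (n : ℕ) : ((n : ℚ) + 1) * ctQ n = cbQ n := by
  unfold ctQ cbQ
  exact_mod_cast succ_mul_catalan_eq_centralBinom n

private lemma cbQ_succ (n : ℕ) : cbQ (n + 1) = 4 * cbQ n - 2 * ctQ n := by
  have h1 : ((n : ℚ) + 1) * cbQ (n + 1) = 2 * (2 * (n : ℚ) + 1) * cbQ n := by
    unfold cbQ
    exact_mod_cast Nat.succ_mul_centralBinom_succ n
  have hn : ((n : ℚ) + 1) ≠ 0 := by positivity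
  have h2 : ((n : ℚ) + 1) * cbQ (n + 1) = ((n : ℚ) + 1) * (4 * cbQ n - 2 * ctQ n) := by
    linear_combination h1 + 2 * ctQ_cb n
  exact mul_left_cancel₀ hn h2

private lemma ctQ_succ (n : ℕ) : ((n : ℚ) + 2) * ctQ (n + 1) = 4 * cbQ n - 2 * ctQ n := by
  have h := ctQ_cb (n + 1)
  push_cast at h
  rw [← cbQ_succ]
  linarith [h]

private lemma sum_ct_ct (m : ℕ) :
    ∑ q ∈ range (m + 1), ctQ q * ctQ (m - q) = ctQ (m + 1) := by
  have h := catalan_succ' m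
  rw [Finset.Nat.sum_antidiagonal_eq_sum_range_succ_mk] at h
  unfold ctQ
  push_cast [h]
  rfl

private lemma sum_ct_cb (m : ℕ) :
    ∑ q ∈ range (m + 1), ctQ q * cbQ (m - q) = cbQ (m + 1) / 2 := by
  have key : ∀ q ∈ range (m + 1),
      ctQ q * cbQ (m - q) = ((m : ℚ) - q + 1) * (ctQ q * ctQ (m - q)) := by
    intro q hq
    have hq' : q ≤ m := by simpa [Nat.lt_succ_iff] using mem_range.mp hq
    rw [← ctQ_cb (m - q), Nat.cast_sub hq']
    ring
  have refl : ∑ q ∈ range (m + 1), ((m : ℚ) - q + 1) * (ctQ q * ctQ (m - q))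
      = ∑ q ∈ range (m + 1), ((q : ℚ) + 1) * (ctQ q * ctQ (m - q)) := by
    rw [← Finset.sum_range_reflect (fun q => ((q : ℚ) + 1) * (ctQ q * ctQ (m - q))) (m + 1)]
    apply sum_congr rfl
    intro q hq
    have hq' : q ≤ m := by simpa [Nat.lt_succ_iff] using mem_range.mp hq
    have h1 : m + 1 - 1 - q = m - q := by omega
    have h2 : m - (m - q) = q := by omega
    rw [h1, h2, Nat.cast_sub hq']
    ring
  have comb : (∑ q ∈ range (m + 1), ((m : ℚ) - q + 1) * (ctQ q * ctQ (m - q)))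
      + (∑ q ∈ range (m + 1), ((q : ℚ) + 1) * (ctQ q * ctQ (m - q)))
      = ((m : ℚ) + 2) * ctQ (m + 1) := by
    rw [← sum_add_distrib]
    have : ∀ q ∈ range (m + 1),
        ((m : ℚ) - q + 1) * (ctQ q * ctQ (m - q)) + ((q : ℚ) + 1) * (ctQ q * ctQ (m - q))
        = ((m : ℚ) + 2) * (ctQ q * ctQ (m - q)) := by
      intro q _; ring
    rw [sum_congr rfl this, ← mul_sum, sum_ct_ct]
  have hcb : ((m : ℚ) + 2) * ctQ (m + 1) = cbQ (m + 1) := by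
    have := ctQ_cb (m + 1)
    push_cast at this
    linarith [this]
  rw [sum_congr rfl key]
  rw [refl] at comb ⊢
  linarith [comb, hcb]

private lemma sum_cb_ct (m : ℕ) :
    ∑ q ∈ range (m + 1), cbQ q * ctQ (m - q) = cbQ (m + 1) / 2 := by
  rw [← sum_ct_cb m, ← Finset.sum_range_reflect (fun q => ctQ q * cbQ (m - q)) (m + 1)]
  apply sum_congr rfl
  intro q hq
  have hq' : q ≤ m := by simpa [Nat.lt_succ_iff] using mem_range.mp hq
  have h1 : m + 1 - 1 - q = m - q := by omega
  have h2 : m - (m - q) = q := by omega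
  rw [h1, h2]
  ring

private lemma sum_cb_cb (m : ℕ) :
    ∑ q ∈ range (m + 1), cbQ q * cbQ (m - q) = 4 ^ m := by
  induction m with
  | zero => simp [cbQ, Nat.centralBinom]
  | succ n ih =>
    rw [sum_range_succ]
    have step : ∀ q ∈ range (n + 1),
        cbQ q * cbQ (n + 1 - q)
          = 4 * (cbQ q * cbQ (n - q)) - 2 * (cbQ q * ctQ (n - q)) := by
      intro q hq
      have hq' : q ≤ n := by simpa [Nat.lt_succ_iff] using mem_range.mp hq
      have h1 : n + 1 - q = (n - q) + 1 := by omega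
      rw [h1, cbQ_succ]
      ring
    rw [sum_congr rfl step, sum_sub_distrib, ← mul_sum, ← mul_sum, ih, sum_cb_ct n]
    have h0 : n + 1 - (n + 1) = 0 := by omega
    have hcb0 : cbQ 0 = 1 := by simp [cbQ, Nat.centralBinom]
    rw [h0, hcb0]
    ring

private lemma sum_q_cb_cb (m : ℕ) :
    ∑ q ∈ range (m + 1), (q : ℚ) * (cbQ q * cbQ (m - q)) = (m : ℚ) * 4 ^ m / 2 := by
  have refl : ∑ q ∈ range (m + 1), (q : ℚ) * (cbQ q * cbQ (m - q))
      = ∑ q ∈ range (m + 1), ((m : ℚ) - q) * (cbQ q * cbQ (m - q)) := by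
    rw [← Finset.sum_range_reflect (fun q => ((q : ℚ)) * (cbQ q * cbQ (m - q))) (m + 1)]
    apply sum_congr rfl
    intro q hq
    have hq' : q ≤ m := by simpa [Nat.lt_succ_iff] using mem_range.mp hq
    have h1 : m + 1 - 1 - q = m - q := by omega
    have h2 : m - (m - q) = q := by omega
    rw [h1, h2, Nat.cast_sub hq']
    ring
  have comb : (∑ q ∈ range (m + 1), (q : ℚ) * (cbQ q * cbQ (m - q)))
      + (∑ q ∈ range (m + 1), ((m : ℚ) - q) * (cbQ q * cbQ (m - q)))
      = (m : ℚ) * 4 ^ m := by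
    rw [← sum_add_distrib]
    have : ∀ q ∈ range (m + 1),
        (q : ℚ) * (cbQ q * cbQ (m - q)) + ((m : ℚ) - q) * (cbQ q * cbQ (m - q))
        = (m : ℚ) * (cbQ q * cbQ (m - q)) := by intro q _; ring
    rw [sum_congr rfl this, ← mul_sum, sum_cb_cb]
  linarith [comb, refl]

private lemma sum_cb_cb_div (m : ℕ) :
    ∑ q ∈ range (m + 1), cbQ q * cbQ (m - q) / ((q : ℚ) + 2) = cbQ (m + 2) / 12 := by
  have key : ∀ q ∈ range (m + 1),
      ctQ (q + 1) * cbQ (m - q)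
        = 6 * (cbQ q * cbQ (m - q) / ((q : ℚ) + 2)) - 2 * (ctQ q * cbQ (m - q)) := by
    intro q _
    have h := ctQ_succ q
    have hb := ctQ_cb q
    have h2 : ((q : ℚ) + 2) ≠ 0 := by positivity
    field_simp
    linear_combination cbQ (m - q) * h + 2 * cbQ (m - q) * hb
  have shift : ∑ q ∈ range (m + 2), ctQ q * cbQ (m + 1 - q)
      = (∑ q ∈ range (m + 1), ctQ (q + 1) * cbQ (m - q)) + ctQ 0 * cbQ (m + 1) := by
    rw [Finset.sum_range_succ']
    congr 1
    apply sum_congr rfl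
    intro q _
    have : m + 1 - (q + 1) = m - q := by omega
    rw [this]
  have hsa1 := sum_ct_cb (m + 1)
  rw [shift] at hsa1
  rw [sum_congr rfl key, sum_sub_distrib, ← mul_sum, ← mul_sum, sum_ct_cb m] at hsa1
  have hct0 : ctQ 0 = 1 := by simp [ctQ]
  rw [hct0] at hsa1
  linarith [hsa1]

private lemma cbQ_eq_factorial (n : ℕ) :
    cbQ n = ((2 * n).factorial : ℚ) / ((n.factorial : ℚ) * (n.factorial : ℚ)) := by
  have h : (2 * n).choose n * n.factorial * (2 * n - n).factorial = (2 * n).factorial :=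
    Nat.choose_mul_factorial_mul_factorial (by omega)
  have h2 : 2 * n - n = n := by omega
  rw [h2] at h
  have hQ : (cbQ n) * (n.factorial : ℚ) * (n.factorial : ℚ) = ((2 * n).factorial : ℚ) := by
    unfold cbQ Nat.centralBinom
    exact_mod_cast congrArg (Nat.cast : ℕ → ℚ) h
  have hf : (n.factorial : ℚ) ≠ 0 := by exact_mod_cast n.factorial_ne_zero
  field_simp
  linarith [hQ]

private lemma final_closed (m : ℕ) (hm : 1 ≤ m) :
    3 * (m : ℚ) * 4 ^ m - (m : ℚ) * 4 ^ m / 2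
      + ((m : ℚ) ^ 3 - (m : ℚ)) * (cbQ (m + 1) / 2)
      - ((m : ℚ) ^ 3 + 3 * (m : ℚ) ^ 2 + 2 * (m : ℚ)) * (cbQ (m + 2) / 12)
    = (5 * (m : ℚ) / 2) * 4 ^ m
      + (1 / 3) * ((m : ℚ) - 6)
        * ((2 * m + 1).factorial : ℚ) / ((m.factorial : ℚ) * ((m - 1).factorial : ℚ)) := by
  obtain ⟨k, rfl⟩ : ∃ k, m = k + 1 := ⟨m - 1, by omega⟩
  have e1 : k + 1 - 1 = k := by omega
  have e3 : 2 * (k + 2) = 2 * k + 4 := by ring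
  have e4 : 2 * (k + 3) = 2 * k + 6 := by ring
  have e5 : 2 * (k + 1) + 1 = 2 * k + 3 := by ring
  rw [cbQ_eq_factorial, cbQ_eq_factorial, e1, e3, e4, e5]
  have f1 : ((k + 1).factorial : ℚ) = ((k : ℚ) + 1) * (k.factorial : ℚ) := by
    rw [Nat.factorial_succ]; push_cast; ring
  have f2 : ((k + 2).factorial : ℚ) = ((k : ℚ) + 2) * ((k : ℚ) + 1) * (k.factorial : ℚ) := by
    have h : (k + 2).factorial = (k + 2) * (k + 1).factorial := by
      rw [show k + 2 = (k + 1) + 1 by omega, Nat.factorial_succ]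
    rw [h]; push_cast; rw [f1]; ring
  have f3 : ((k + 3).factorial : ℚ)
      = ((k : ℚ) + 3) * ((k : ℚ) + 2) * ((k : ℚ) + 1) * (k.factorial : ℚ) := by
    have h : (k + 3).factorial = (k + 3) * (k + 2).factorial := by
      rw [show k + 3 = (k + 2) + 1 by omega, Nat.factorial_succ]
    rw [h]; push_cast; rw [f2]; ring
  have g1 : ((2 * k + 4).factorial : ℚ) = (2 * (k : ℚ) + 4) * ((2 * k + 3).factorial : ℚ) := by
    have h : (2 * k + 4).factorial = (2 * k + 4) * (2 * k + 3).factorial := by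
      rw [show 2 * k + 4 = (2 * k + 3) + 1 by omega, Nat.factorial_succ]
    rw [h]; push_cast; ring
  have g2 : ((2 * k + 6).factorial : ℚ)
      = (2 * (k : ℚ) + 6) * (2 * (k : ℚ) + 5) * (2 * (k : ℚ) + 4)
        * ((2 * k + 3).factorial : ℚ) := by
    have h : (2 * k + 6).factorial
        = (2 * k + 6) * ((2 * k + 5) * (2 * k + 4).factorial) := by
      rw [show 2 * k + 6 = (2 * k + 4 + 1) + 1 by omega, Nat.factorial_succ,
        Nat.factorial_succ]
    rw [h]; push_cast; rw [g1]; ring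
  rw [f1, f2, f3, g1, g2]
  have hk : (k.factorial : ℚ) ≠ 0 := by exact_mod_cast k.factorial_ne_zero
  have h23 : ((2 * k + 3).factorial : ℚ) ≠ 0 := by exact_mod_cast (2 * k + 3).factorial_ne_zero
  have hk1 : ((k : ℚ) + 1) ≠ 0 := by positivity
  have hk2 : ((k : ℚ) + 2) ≠ 0 := by positivity
  have hk3 : ((k : ℚ) + 3) ≠ 0 := by positivity
  push_cast
  field_simp
  ring

theorem A_m_two (m : ℕ) (hm : 1 ≤ m) :
    ∑ q ∈ Finset.range (m + 1),
      ((2 * q).choose q : ℚ) * ((2 * m - 2 * q).choose (m - q) : ℚ)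
        * ((m : ℚ) - q) * ((m : ℚ) - q - 1) * ((m : ℚ) - q - 2)
        / (((q : ℚ) + 1) * ((q : ℚ) + 2))
    = (5 * (m : ℚ) / 2) * 4 ^ m
      + (1 / 3) * ((m : ℚ) - 6)
        * ((2 * m + 1).factorial : ℚ) / ((m.factorial : ℚ) * ((m - 1).factorial : ℚ)) := by
  have hterm : ∀ q ∈ range (m + 1),
      ((2 * q).choose q : ℚ) * ((2 * m - 2 * q).choose (m - q) : ℚ)
        * ((m : ℚ) - q) * ((m : ℚ) - q - 1) * ((m : ℚ) - q - 2)
        / (((q : ℚ) + 1) * ((q : ℚ) + 2))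
      = 3 * (m : ℚ) * (cbQ q * cbQ (m - q)) - (q : ℚ) * (cbQ q * cbQ (m - q))
        + ((m : ℚ) ^ 3 - (m : ℚ)) * (ctQ q * cbQ (m - q))
        - ((m : ℚ) ^ 3 + 3 * (m : ℚ) ^ 2 + 2 * (m : ℚ))
          * (cbQ q * cbQ (m - q) / ((q : ℚ) + 2)) := by
    intro q hq
    have e1 : ((2 * q).choose q : ℚ) = cbQ q := rfl
    have e2' : 2 * m - 2 * q = 2 * (m - q) := by omega
    have e2 : ((2 * m - 2 * q).choose (m - q) : ℚ) = cbQ (m - q) := by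
      rw [e2']; rfl
    rw [e1, e2, ← ctQ_cb q]
    have h1 : ((q : ℚ) + 1) ≠ 0 := by positivity
    have h2 : ((q : ℚ) + 2) ≠ 0 := by positivity
    field_simp
    ring
  rw [sum_congr rfl hterm]
  rw [sum_sub_distrib, sum_add_distrib, sum_sub_distrib, ← mul_sum, ← mul_sum, ← mul_sum,
    sum_cb_cb, sum_q_cb_cb, sum_ct_cb, sum_cb_cb_div]
  exact final_closed m hm
end

section
/- Let m ≥ 1 and s ≥ 0 be integers. Define B(m,s) as the rational number given by the sum over q from 1 to m-1 of C(m,q)·C(m-1,q+s)/C(2m,2q), and define A(m,s) as the rational number given by the sum over q from 0 to m of C(2q,q)·C(2m-2q,m-q) times the product of (m-q-i) for i from 0 to s (taken as integers), divided by the product of (q+j) for j from 1 to s. Then B(m,s) = (m!·(m-1)!/(2m)!)·A(m,s) - C(m-1,s). -/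
/-- `B(m,s) = ∑_{q=1}^{m-1} C(m,q) C(m-1,q+s) / C(2m,2q)`. -/
def B (m s : ℕ) : ℚ :=
  ∑ q ∈ Finset.Icc 1 (m - 1),
    ((m.choose q : ℚ) * ((m - 1).choose (q + s) : ℚ)) / ((2 * m).choose (2 * q) : ℚ)

/-- `A(m,s) = ∑_{q=0}^m C(2q,q) C(2m-2q,m-q) · ∏_{i=0}^s (m-q-i) / ∏_{j=1}^s (q+j)`. -/
def A (m s : ℕ) : ℚ :=
  ∑ q ∈ Finset.range (m + 1),
    ((2 * q).choose q : ℚ) * ((2 * m - 2 * q).choose (m - q) : ℚ)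
      * (∏ i ∈ Finset.range (s + 1), ((m : ℚ) - q - i))
      / ∏ j ∈ Finset.Icc 1 s, ((q : ℚ) + j)

lemma factq_ne (n : ℕ) : ((n.factorial : ℚ)) ≠ 0 := by exact_mod_cast Nat.factorial_ne_zero n

lemma prodP (n k : ℕ) (h : k ≤ n) :
    ∏ i ∈ Finset.range k, ((n:ℚ) - i) = n.factorial / (n - k).factorial := by
  induction k with
  | zero => simp [div_self (factq_ne n)]
  | succ k ih =>
    rw [Finset.prod_range_succ, ih (by omega)]
    have h2 : ((n - k).factorial : ℚ) = (n - (k+1)).factorial * ((n:ℚ) - k) := by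
      have h1 : n - k = (n - (k+1)) + 1 := by omega
      rw [h1, Nat.factorial_succ]
      push_cast
      rw [Nat.cast_sub (by omega : k + 1 ≤ n)]
      push_cast; ring
    rw [h2]
    have hf := factq_ne (n - (k+1))
    have hg : ((n:ℚ) - k) ≠ 0 := by
      have : (k:ℚ) < n := by exact_mod_cast (by omega : k < n)
      linarith
    field_simp

lemma prodQ (q s : ℕ) :
    ∏ j ∈ Finset.Icc 1 s, ((q:ℚ) + j) = (q+s).factorial / q.factorial := by
  induction s with
  | zero => simp [div_self (factq_ne q)]
  | succ s ih =>
    rw [show Finset.Icc 1 (s+1) = insert (s+1) (Finset.Icc 1 s) by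
          ext x; simp only [Finset.mem_Icc, Finset.mem_insert]; omega,
        Finset.prod_insert (by simp), ih]
    rw [show q + (s+1) = (q+s)+1 by ring, Nat.factorial_succ]
    push_cast
    field_simp [factq_ne]
    ring

lemma prodP' (m q s : ℕ) (hq : q ≤ m) :
    ∏ i ∈ Finset.range (s+1), ((m:ℚ) - q - i)
      = ∏ i ∈ Finset.range (s+1), (((m - q : ℕ):ℚ) - i) := by
  refine Finset.prod_congr rfl fun i _ => ?_
  rw [Nat.cast_sub hq]

lemma key (m s q : ℕ) (hq1 : 1 ≤ q) (hq2 : q + 1 ≤ m) :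
    ((m.choose q : ℚ) * ((m - 1).choose (q + s) : ℚ)) / ((2 * m).choose (2 * q) : ℚ)
    = ((m.factorial : ℚ) * ((m - 1).factorial : ℚ) / ((2 * m).factorial : ℚ)) *
      (((2 * q).choose q : ℚ) * ((2 * m - 2 * q).choose (m - q) : ℚ)
        * (∏ i ∈ Finset.range (s + 1), ((m : ℚ) - q - i))
        / ∏ j ∈ Finset.Icc 1 s, ((q : ℚ) + j)) := by
  rw [prodP' m q s (by omega), prodQ]
  by_cases hcase : q + s + 1 ≤ m
  · rw [prodP (m - q) (s+1) (by omega)]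
    rw [Nat.cast_choose ℚ (by omega : q ≤ m),
        Nat.cast_choose ℚ (by omega : q + s ≤ m - 1),
        Nat.cast_choose ℚ (by omega : 2 * q ≤ 2 * m),
        Nat.cast_choose ℚ (by omega : q ≤ 2 * q),
        Nat.cast_choose ℚ (by omega : m - q ≤ 2 * m - 2 * q)]
    rw [show 2 * q - q = q by omega,
        show 2 * m - 2 * q - (m - q) = m - q by omega,
        show m - 1 - (q + s) = m - q - (s + 1) by omega]
    have h1 := factq_ne q
    have h2 := factq_ne (m - q)
    have h3 := factq_ne (q + s)
    have h4 := factq_ne (m - q - (s+1))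
    have h5 := factq_ne (2*m)
    have h6 := factq_ne m
    have h7 := factq_ne (m-1)
    have h8 := factq_ne (2*q)
    have h9 := factq_ne (2*m - 2*q)
    field_simp
  · have hz1 : ((m - 1).choose (q + s) : ℚ) = 0 := by
      rw [Nat.choose_eq_zero_of_lt (by omega)]; simp
    have hz2 : ∏ i ∈ Finset.range (s+1), (((m - q : ℕ):ℚ) - i) = 0 := by
      apply Finset.prod_eq_zero (i := m - q)
      · simp; omega
      · simp
    rw [hz1, hz2]
    simp

lemma key0 (m s : ℕ) (hm : 1 ≤ m) :
    ((m.factorial : ℚ) * ((m - 1).factorial : ℚ) / ((2 * m).factorial : ℚ)) *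
      (((2 * 0).choose 0 : ℚ) * ((2 * m - 2 * 0).choose (m - 0) : ℚ)
        * (∏ i ∈ Finset.range (s + 1), ((m : ℚ) - (0:ℕ) - i))
        / ∏ j ∈ Finset.Icc 1 s, (((0:ℕ) : ℚ) + j))
    = ((m - 1).choose s : ℚ) := by
  rw [prodP' m 0 s (by omega), prodQ]
  simp only [Nat.mul_zero, Nat.sub_zero, Nat.choose_zero_right, Nat.cast_one, one_mul,
    Nat.zero_add, Nat.factorial_zero]
  by_cases hcase : s + 1 ≤ m
  · rw [prodP m (s+1) (by omega)]
    rw [Nat.cast_choose ℚ (by omega : m ≤ 2 * m),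
        Nat.cast_choose ℚ (by omega : s ≤ m - 1)]
    rw [show 2 * m - m = m by omega, show m - 1 - s = m - (s + 1) by omega]
    have h1 := factq_ne m
    have h2 := factq_ne (m - (s+1))
    have h3 := factq_ne s
    have h4 := factq_ne (2*m)
    have h5 := factq_ne (m-1)
    field_simp
  · have hz1 : ((m - 1).choose s : ℚ) = 0 := by
      rw [Nat.choose_eq_zero_of_lt (by omega)]; simp
    have hz2 : ∏ i ∈ Finset.range (s+1), (((m : ℕ):ℚ) - i) = 0 := by
      apply Finset.prod_eq_zero (i := m)
      · simp; omega
      · simp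
    rw [hz1, hz2]
    simp

lemma keym (m s : ℕ) :
    ((2 * m).choose m : ℚ) * ((2 * m - 2 * m).choose (m - m) : ℚ)
        * (∏ i ∈ Finset.range (s + 1), ((m : ℚ) - (m:ℕ) - i))
        / ∏ j ∈ Finset.Icc 1 s, (((m:ℕ) : ℚ) + j) = 0 := by
  have hz : ∏ i ∈ Finset.range (s+1), ((m:ℚ) - (m:ℕ) - i) = 0 := by
    apply Finset.prod_eq_zero (i := 0)
    · simp
    · simp
  rw [hz]
  simp

theorem B_eq_A (m s : ℕ) (hm : 1 ≤ m) :
    B m s = ((m.factorial : ℚ) * ((m - 1).factorial : ℚ) / ((2 * m).factorial : ℚ)) * A m s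
      - ((m - 1).choose s : ℚ) := by
  have hsplit : Finset.range (m+1) = insert 0 (insert m (Finset.Icc 1 (m-1))) := by
    ext x
    simp only [Finset.mem_range, Finset.mem_insert, Finset.mem_Icc]
    omega
  have h0mem : (0:ℕ) ∉ insert m (Finset.Icc 1 (m-1)) := by
    simp only [Finset.mem_insert, Finset.mem_Icc]
    omega
  have hmmem : m ∉ Finset.Icc 1 (m-1) := by
    simp only [Finset.mem_Icc]
    omega
  rw [B, A, hsplit, Finset.sum_insert h0mem, Finset.sum_insert hmmem,
      mul_add, mul_add, key0 m s hm]
  rw [show ((2 * m).choose m : ℚ) * ((2 * m - 2 * m).choose (m - m) : ℚ)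
        * (∏ i ∈ Finset.range (s + 1), ((m : ℚ) - (m:ℕ) - i))
        / ∏ j ∈ Finset.Icc 1 s, (((m:ℕ) : ℚ) + j) = 0 from keym m s, mul_zero, zero_add,
      add_sub_cancel_left, Finset.mul_sum]
  refine Finset.sum_congr rfl fun q hq => ?_
  rw [Finset.mem_Icc] at hq
  exact key m s q hq.1 (by omega)
end

section
/- For every integer m ≥ 1, the sum over q from 1 to m-1 of (C(m,q)/C(2m,2q))·(8·C(m-1,q+2) + 5·C(m-1,q+1) + C(m-1,q)) (as rational numbers) equals (4/3)·m^2 - (37/3)·m - 15 + 13·4^m·(m!)^2/(2m)!. -/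
/-!
Write `F(m,q)` for the summand and `S(m)` for the sum. Zeilberger's algorithm yields the
certificate `G(m,q) = C(m,q)² / C(2m,2q) · N(m,q) / (m (q+1) (q+2) (2m-2q-1))`, with `N` an
explicit polynomial, such that `(2m+1) F(m+1,q) - (2m+2) F(m,q) = G(m,q) - G(m,q+1)`. Since every
binomial ratio involved is `C(m,q)² / C(2m,2q)` times a rational function of `m` and `q`, this is
a rational-function identity. Summing over `1 ≤ q ≤ m` telescopes to
`(2m+1) S(m+1) = (2m+2) S(m) + G(m,1)`, and `G(m,1) = 4m² - 7m + 4`. The right-hand side obeys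
the same recurrence (the polynomial part produces the inhomogeneity, `4^m (m!)² / (2m)!` solves
the homogeneous part), and both sides vanish at `m = 1`.
-/

open Finset

theorem Nat.cast_choose_succ_right_mul {R : Type*} [CommRing R] (n k : ℕ) :
    (n.choose (k + 1) : R) * (k + 1) = n.choose k * (n - k) := by
  rcases le_or_gt k n with hk | hk
  · have h := congrArg (Nat.cast : ℕ → R) (Nat.choose_succ_right_eq n k)
    push_cast [Nat.cast_sub hk] at h
    exact h
  · simp [Nat.choose_eq_zero_of_lt hk, Nat.choose_eq_zero_of_lt (Nat.lt_succ_of_lt hk)]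

theorem Nat.cast_succ_choose_mul {R : Type*} [CommRing R] (n k : ℕ) :
    ((n + 1).choose k : R) * (n + 1 - k) = n.choose k * (n + 1) := by
  rcases le_or_gt k (n + 1) with hk | hk
  · have h := congrArg (Nat.cast : ℕ → R) (Nat.choose_mul_succ_eq n k)
    push_cast [Nat.cast_sub hk] at h
    exact h.symm
  · simp [Nat.choose_eq_zero_of_lt hk, Nat.choose_eq_zero_of_lt (Nat.lt_of_succ_lt hk)]

theorem Nat.cast_choose_succ_right {K : Type*} [Field K] [CharZero K] (n k : ℕ) :
    (n.choose (k + 1) : K) = n.choose k * (n - k) / (k + 1) :=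
  eq_div_of_mul_eq (Nat.cast_add_one_ne_zero k) (Nat.cast_choose_succ_right_mul n k)

theorem two_mul_sub_sub_one_ne_zero (a b : ℤ) : (2 * (a - b) - 1 : ℚ) ≠ 0 := by
  intro h
  have : 2 * a = 2 * b + 1 := by exact_mod_cast (by linarith : (2 * a : ℚ) = 2 * b + 1)
  omega

namespace Dumbbell

def term (m q : ℕ) : ℚ :=
  (m.choose q : ℚ) / ((2 * m).choose (2 * q) : ℚ)
    * (8 * ((m - 1).choose (q + 2) : ℚ) + 5 * ((m - 1).choose (q + 1) : ℚ)
        + ((m - 1).choose q : ℚ))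

def closedForm (m : ℕ) : ℚ :=
  (4 / 3) * (m : ℚ) ^ 2 - (37 / 3) * (m : ℚ) - 15
    + 13 * 4 ^ m * (m.factorial : ℚ) ^ 2 / ((2 * m).factorial : ℚ)

def centralRatio (m q : ℕ) : ℚ := (m.choose q : ℚ) ^ 2 / ((2 * m).choose (2 * q) : ℚ)

theorem term_eq {m : ℕ} (hm : 1 ≤ m) (q : ℕ) :
    term m q = centralRatio m q * ((m - q) * (8 * (m - q - 1) * (m - q - 2)
      + 5 * (m - q - 1) * (q + 2) + (q + 1) * (q + 2)) / (m * (q + 1) * (q + 2))) := by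
  obtain ⟨n, rfl⟩ : ∃ n, m = n + 1 := ⟨m - 1, by omega⟩
  have h0 : (n.choose q : ℚ) = (n + 1).choose q * (n + 1 - q) / (n + 1) :=
    eq_div_of_mul_eq (by positivity) (Nat.cast_succ_choose_mul n q).symm
  simp only [term, centralRatio, Nat.add_sub_cancel, Nat.cast_choose_succ_right n (q + 1),
    Nat.cast_choose_succ_right n q, h0]
  push_cast
  field_simp
  ring

theorem centralRatio_succ_left {m q : ℕ} (hq : q ≤ m) :
    centralRatio (m + 1) q
      = centralRatio m q * ((m + 1) * (2 * m + 1 - 2 * q) / ((m + 1 - q) * (2 * m + 1))) := by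
  have hq' : (q : ℚ) ≤ m := by exact_mod_cast hq
  have h0 : ((m + 1).choose q : ℚ) = m.choose q * (m + 1) / (m + 1 - q) :=
    eq_div_of_mul_eq (by linarith) (Nat.cast_succ_choose_mul m q)
  have h1 : ((2 * m + 1).choose (2 * q) : ℚ)
      = (2 * m).choose (2 * q) * (2 * m + 1) / (2 * m + 1 - 2 * q) :=
    eq_div_of_mul_eq (by linarith) (by exact_mod_cast Nat.cast_succ_choose_mul (2 * m) (2 * q))
  have h2 : ((2 * m + 2).choose (2 * q) : ℚ)
      = (2 * m + 1).choose (2 * q) * (2 * m + 2) / (2 * m + 2 - 2 * q) :=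
    eq_div_of_mul_eq (by linarith)
      (by exact_mod_cast Nat.cast_succ_choose_mul (2 * m + 1) (2 * q))
  have hd : ((2 * m).choose (2 * q) : ℚ) ≠ 0 := by
    have := Nat.choose_pos (show 2 * q ≤ 2 * m by omega); positivity
  rw [centralRatio, centralRatio, show 2 * (m + 1) = 2 * m + 2 by ring, h2, h1, h0]
  have : (m + 1 - q : ℚ) ≠ 0 := by linarith
  have : (2 * m + 1 - 2 * q : ℚ) ≠ 0 := by linarith
  have : (2 * m + 2 - 2 * q : ℚ) ≠ 0 := by linarith
  field_simp

theorem centralRatio_succ_right {m q : ℕ} (hq : q ≤ m) :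
    centralRatio m (q + 1)
      = centralRatio m q * ((m - q) * (2 * q + 1) / ((q + 1) * (2 * (m - q) - 1))) := by
  rcases hq.eq_or_lt with rfl | hq
  · simp [centralRatio]
  have hq' : (q : ℚ) + 1 ≤ m := by exact_mod_cast hq
  have hd : ((2 * m).choose (2 * q) : ℚ) ≠ 0 := by
    have := Nat.choose_pos (show 2 * q ≤ 2 * m by omega); positivity
  rw [centralRatio, centralRatio, show 2 * (q + 1) = 2 * q + 1 + 1 by ring,
    Nat.cast_choose_succ_right (2 * m) (2 * q + 1), Nat.cast_choose_succ_right (2 * m) (2 * q),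
    Nat.cast_choose_succ_right m q]
  push_cast
  have : (m - q : ℚ) ≠ 0 := by linarith
  have : (2 * (m - q) - 1 : ℚ) ≠ 0 := by linarith
  field_simp
  ring

def wzNumerator (m q : ℚ) : ℚ :=
  16 * q ^ 5 + (48 - 76 * m) * q ^ 4 + (28 - 196 * m + 136 * m ^ 2) * q ^ 3
    + (-12 - 77 * m + 312 * m ^ 2 - 108 * m ^ 3) * q ^ 2
    + (-8 + 25 * m + 72 * m ^ 2 - 228 * m ^ 3 + 32 * m ^ 4) * q
    + (6 * m - 16 * m ^ 2 - 24 * m ^ 3 + 64 * m ^ 4)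

def certificate (m q : ℕ) : ℚ :=
  centralRatio m q * wzNumerator m q / (m * (q + 1) * (q + 2) * (2 * (m - q) - 1))

theorem certificate_sub_succ {m q : ℕ} (hm : 1 ≤ m) (hq : q ≤ m) :
    certificate m q - certificate m (q + 1)
      = (2 * m + 1) * term (m + 1) q - (2 * m + 2) * term m q := by
  rw [certificate, certificate, term_eq hm, term_eq (by omega), centralRatio_succ_left hq,
    centralRatio_succ_right hq, wzNumerator, wzNumerator]
  have hq' : (q : ℚ) ≤ m := by exact_mod_cast hq
  have hm' : (m : ℚ) ≠ 0 := by positivity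
  have : (m + 1 - q : ℚ) ≠ 0 := by linarith
  have := two_mul_sub_sub_one_ne_zero m q
  have := two_mul_sub_sub_one_ne_zero m (q + 1)
  push_cast at *
  field_simp
  ring

theorem certificate_one {m : ℕ} (hm : 1 ≤ m) : certificate m 1 = 4 * m ^ 2 - 7 * m + 4 := by
  have hρ : centralRatio m 1 = m / (2 * m - 1) := by
    simpa [centralRatio] using centralRatio_succ_right (m := m) (Nat.zero_le m)
  have hm' : (m : ℚ) ≠ 0 := by positivity
  have : (2 * m - 1 : ℚ) ≠ 0 := by simpa using two_mul_sub_sub_one_ne_zero m 0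
  have : (2 * (m - 1) - 1 : ℚ) ≠ 0 := by simpa using two_mul_sub_sub_one_ne_zero m 1
  have hN : wzNumerator m 1
      = 6 * (2 * m - 1) * (2 * (m - 1) - 1) * (4 * m ^ 2 - 7 * m + 4) := by
    rw [wzNumerator]; ring
  rw [certificate, hρ, Nat.cast_one, hN, div_mul_eq_mul_div, div_div,
    div_eq_iff (by positivity)]
  ring

theorem certificate_succ_self (m : ℕ) : certificate m (m + 1) = 0 := by
  simp [certificate, centralRatio]

theorem term_self {m : ℕ} (hm : 1 ≤ m) : term m m = 0 := by
  simp [term_eq hm]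

theorem sum_term_recurrence {m : ℕ} (hm : 1 ≤ m) :
    (2 * m + 1) * ∑ q ∈ Icc 1 m, term (m + 1) q
      = (2 * m + 2) * ∑ q ∈ Icc 1 (m - 1), term m q + (4 * m ^ 2 - 7 * m + 4) := by
  have hlast : ∑ q ∈ Icc 1 (m - 1), term m q = ∑ q ∈ Icc 1 m, term m q := by
    obtain ⟨n, rfl⟩ : ∃ n, m = n + 1 := ⟨m - 1, by omega⟩
    rw [sum_Icc_succ_top (by omega), term_self hm, add_zero, Nat.add_sub_cancel]
  have htelescope : ∑ q ∈ Icc 1 m, (certificate m q - certificate m (q + 1))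
      = certificate m 1 - certificate m (m + 1) := by
    rw [← neg_sub (certificate m (m + 1)), ← sum_Icc_sub hm, ← sum_neg_distrib]
    simp only [neg_sub]
  calc (2 * m + 1) * ∑ q ∈ Icc 1 m, term (m + 1) q
      = ∑ q ∈ Icc 1 m, ((2 * m + 2) * term m q + (certificate m q - certificate m (q + 1))) := by
        rw [mul_sum]
        refine sum_congr rfl fun q hq => ?_
        rw [certificate_sub_succ hm (mem_Icc.1 hq).2]
        ring
    _ = (2 * m + 2) * ∑ q ∈ Icc 1 (m - 1), term m q + (4 * m ^ 2 - 7 * m + 4) := by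
        rw [sum_add_distrib, ← mul_sum, htelescope, hlast, certificate_one hm,
          certificate_succ_self, sub_zero]

theorem closedForm_recurrence (m : ℕ) :
    (2 * m + 1) * closedForm (m + 1) = (2 * m + 2) * closedForm m + (4 * m ^ 2 - 7 * m + 4) := by
  rw [closedForm, closedForm, show 2 * (m + 1) = 2 * m + 1 + 1 by ring, Nat.factorial_succ,
    Nat.factorial_succ, Nat.factorial_succ]
  push_cast
  field_simp
  ring

end Dumbbell

theorem dumbbell_total_sum (m : ℕ) (hm : 1 ≤ m) :
    ∑ q ∈ Finset.Icc 1 (m - 1),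
      ((m.choose q : ℚ) / ((2 * m).choose (2 * q) : ℚ))
        * (8 * ((m - 1).choose (q + 2) : ℚ) + 5 * ((m - 1).choose (q + 1) : ℚ)
            + ((m - 1).choose q : ℚ))
    = (4 / 3) * (m : ℚ) ^ 2 - (37 / 3) * (m : ℚ) - 15
      + 13 * 4 ^ m * (m.factorial : ℚ) ^ 2 / ((2 * m).factorial : ℚ) := by
  change ∑ q ∈ Icc 1 (m - 1), Dumbbell.term m q = Dumbbell.closedForm m
  induction m, hm using Nat.le_induction with
  | base => norm_num [Dumbbell.closedForm]
  | succ m hm ih =>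
    apply mul_left_cancel₀ (by positivity : (2 * m + 1 : ℚ) ≠ 0)
    rw [Nat.add_sub_cancel, Dumbbell.sum_term_recurrence hm, ih, Dumbbell.closedForm_recurrence]
end
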